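/- arXiv:2004.13417 — 2 statements merged into one kernel-verified Lean document; each statement's English description precedes it below -/
import Mathlib

section
/- Let a ∈ ℝ^n be nonzero, b ∈ ℝ, and δ_1 ≥ δ_2 > 0. Then for every x ∈ ℝ^n, ‖∇h_{δ_1}(x; a, b) − ∇h_{δ_2}(x; a, b)‖ ≤ (δ_1 − δ_2)/(2δ_1). -/
open scoped RealInnerProductSpace

/-- The one-sided Huber penalty `h_δ(x; a, b)`. -/
noncomputable def huber {n : ℕ} (δ : ℝ) (a : EuclideanSpace ℝ (Fin n)) (b : ℝ)
    (x : EuclideanSpace ℝ (Fin n)) : ℝ :=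
  if δ < ⟪a, x⟫ - b then (⟪a, x⟫ - b) / ‖a‖
  else if -δ ≤ ⟪a, x⟫ - b then (⟪a, x⟫ - b + δ) ^ 2 / (4 * δ * ‖a‖)
  else 0

/-!
With `s = ⟪a, x⟫ - b`, the penalty is `h_δ(x) = p_δ(s) / ‖a‖` where
`p_δ(s) = ((s + δ)₊² - (s - δ)₊²) / (4δ)`. Since `t ↦ t₊²` is differentiable with derivative
`2 t₊`, this gives `∇h_δ(x) = p'_δ(s) • a / ‖a‖` with `p'_δ(s) = ((s + δ)₊ - (s - δ)₊) / (2δ)`,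
so the claim reduces to the scalar bound `|p'_{δ₁}(s) - p'_{δ₂}(s)| ≤ (δ₁ - δ₂) / (2δ₁)`, an
elementary check on each of the intervals cut out by `±δ₁` and `±δ₂`.
-/

lemma hasDerivAt_max_zero_sq (t : ℝ) :
    HasDerivAt (fun s : ℝ => max s 0 ^ 2) (2 * max t 0) t := by
  refine hasDerivAt_of_hasDerivAt_of_ne' (g := fun s => 2 * max s 0) (x := 0) (fun s hs => ?_)
    (by fun_prop) (by fun_prop) t
  rcases hs.lt_or_gt with hs | hs
  · rw [max_eq_right hs.le, mul_zero]
    refine (hasDerivAt_const s (0 : ℝ)).congr_of_eventuallyEq ?_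
    filter_upwards [Iio_mem_nhds hs] with u hu
    simp [max_eq_right (Set.mem_Iio.mp hu).le]
  · rw [max_eq_left hs.le]
    refine (hasDerivAt_pow 2 s).congr_of_eventuallyEq ?_ |>.congr_deriv (by ring)
    filter_upwards [Ioi_mem_nhds hs] with u hu
    rw [max_eq_left (Set.mem_Ioi.mp hu).le]

noncomputable def huberProfile (δ s : ℝ) : ℝ :=
  (max (s + δ) 0 ^ 2 - max (s - δ) 0 ^ 2) / (4 * δ)

noncomputable def huberSlope (δ s : ℝ) : ℝ :=
  (max (s + δ) 0 - max (s - δ) 0) / (2 * δ)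

lemma hasDerivAt_huberProfile (δ s : ℝ) : HasDerivAt (huberProfile δ) (huberSlope δ s) s := by
  have hplus := (hasDerivAt_max_zero_sq (s + δ)).comp s ((hasDerivAt_id s).add_const δ)
  have hminus := (hasDerivAt_max_zero_sq (s - δ)).comp s ((hasDerivAt_id s).sub_const δ)
  refine ((hplus.sub hminus).div_const (4 * δ)).congr_deriv ?_
  simp only [huberSlope, mul_one]
  ring

lemma abs_huberSlope_sub_le {δ₁ δ₂ : ℝ} (hδ₂ : 0 < δ₂) (hδ : δ₂ ≤ δ₁) (s : ℝ) :
    |huberSlope δ₁ s - huberSlope δ₂ s| ≤ (δ₁ - δ₂) / (2 * δ₁) := by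
  have hδ₁ : 0 < δ₁ := hδ₂.trans_le hδ
  set N := δ₂ * (max (s + δ₁) 0 - max (s - δ₁) 0) - δ₁ * (max (s + δ₂) 0 - max (s - δ₂) 0)
  have hnum : |N| ≤ δ₂ * (δ₁ - δ₂) := by
    rw [abs_le]
    rcases le_total (s + δ₁) 0 with h1 | h1 <;> rcases le_total (s + δ₂) 0 with h2 | h2 <;>
      rcases le_total (s - δ₁) 0 with h3 | h3 <;> rcases le_total (s - δ₂) 0 with h4 | h4 <;>
      simp only [N, max_eq_left, max_eq_right, h1, h2, h3, h4] <;> constructor <;> nlinarith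
  have hdiff : huberSlope δ₁ s - huberSlope δ₂ s = N / (2 * δ₁ * δ₂) := by
    rw [huberSlope, huberSlope]
    field_simp
    ring
  calc |huberSlope δ₁ s - huberSlope δ₂ s| = |N| / (2 * δ₁ * δ₂) := by
        rw [hdiff, abs_div, abs_of_pos (by positivity : 0 < 2 * δ₁ * δ₂)]
    _ ≤ δ₂ * (δ₁ - δ₂) / (2 * δ₁ * δ₂) := by gcongr
    _ = (δ₁ - δ₂) / (2 * δ₁) := by field_simp

lemma huber_eq_huberProfile {n : ℕ} {δ : ℝ} (hδ : 0 < δ) (a : EuclideanSpace ℝ (Fin n)) (b : ℝ)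
    (x : EuclideanSpace ℝ (Fin n)) : huber δ a b x = huberProfile δ (⟪a, x⟫ - b) / ‖a‖ := by
  rw [huber, huberProfile, div_div]
  split_ifs with hpos hmid
  · rw [max_eq_left (by linarith), max_eq_left (by linarith)]
    field_simp
    ring
  · rw [max_eq_left (by linarith), max_eq_right (by linarith)]
    ring
  · rw [max_eq_right (by linarith), max_eq_right (by linarith)]
    simp

lemma hasGradientAt_huber {n : ℕ} {δ : ℝ} (hδ : 0 < δ) (a : EuclideanSpace ℝ (Fin n)) (b : ℝ)
    (x : EuclideanSpace ℝ (Fin n)) :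
    HasGradientAt (huber δ a b) ((huberSlope δ (⟪a, x⟫ - b) / ‖a‖) • a) x := by
  have hlin : HasFDerivAt (fun y : EuclideanSpace ℝ (Fin n) => ⟪a, y⟫ - b) (innerSL ℝ a) x :=
    (innerSL ℝ a).hasFDerivAt.sub_const b
  have hcomp := ((hasDerivAt_huberProfile δ _).div_const ‖a‖).comp_hasFDerivAt x hlin
  rw [funext (huber_eq_huberProfile hδ a b), hasGradientAt_iff_hasFDerivAt]
  refine hcomp.congr_fderiv ?_
  ext y
  simp

lemma norm_div_norm_smul_le {E : Type*} [NormedAddCommGroup E] [NormedSpace ℝ E] (c : ℝ) (v : E) :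
    ‖(c / ‖v‖) • v‖ ≤ |c| := by
  rw [norm_smul, norm_div, norm_norm, Real.norm_eq_abs, div_mul_eq_mul_div, mul_div_assoc]
  exact mul_le_of_le_one_right (abs_nonneg c) (div_self_le_one _)

theorem huber_gradient_diff_le_general {n : ℕ} (a : EuclideanSpace ℝ (Fin n)) (b : ℝ)
    (δ₁ δ₂ : ℝ) (hδ₂ : 0 < δ₂) (hδ : δ₂ ≤ δ₁) (x : EuclideanSpace ℝ (Fin n)) :
    ‖gradient (huber δ₁ a b) x - gradient (huber δ₂ a b) x‖ ≤ (δ₁ - δ₂) / (2 * δ₁) := by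
  rw [(hasGradientAt_huber (hδ₂.trans_le hδ) a b x).gradient,
    (hasGradientAt_huber hδ₂ a b x).gradient, ← sub_smul, ← sub_div]
  exact (norm_div_norm_smul_le _ a).trans (abs_huberSlope_sub_le hδ₂ hδ _)

/-- For `δ₁ ≥ δ₂ > 0`, the gradients of the corresponding one-sided Huber penalties differ
in norm by at most `(δ₁ − δ₂)/(2δ₁)` at every point. -/
theorem huber_gradient_diff_le {n : ℕ} (a : EuclideanSpace ℝ (Fin n)) (ha : a ≠ 0) (b : ℝ)
    (δ₁ δ₂ : ℝ) (hδ₂ : 0 < δ₂) (hδ : δ₂ ≤ δ₁) (x : EuclideanSpace ℝ (Fin n)) :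
    ‖gradient (huber δ₁ a b) x - gradient (huber δ₂ a b) x‖ ≤ (δ₁ - δ₂) / (2 * δ₁) :=
  huber_gradient_diff_le_general a b δ₁ δ₂ hδ₂ hδ x
end

section
/- Let f : ℝ^n → ℝ be μ-strongly convex with μ > 0, let a_1,…,a_m ∈ ℝ^n be nonzero and b_1,…,b_m ∈ ℝ, and assume the feasible set X = {x : ⟨a_i,x⟩ ≤ b_i for all i} is nonempty, with x* the minimizer of f over X. Let c > 0 and let {γ_k}, {δ_k} be sequences with γ_k > 0, δ_k > 0 and γ_k δ_k ≤ c for all k, and for each k let x_k* be the minimizer of F_{γ_k δ_k} over ℝ^n. Then every x_k* lies in the level set {x ∈ ℝ^n : f(x) ≤ f(x*) + c/(4 α_min)}, where α_min = min_{1≤i≤m} ‖a_i‖; in particular the sequence {x_k*} is bounded. -/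
open scoped RealInnerProductSpace

/-!
Comparing the penalized objective at its minimizer `x_k*` with its value at the feasible point
`x*`: the penalty is nonnegative, and at a feasible point each Huber term is at most
`δ / (4 ‖a_i‖)`, so `f(x_k*) ≤ f(x*) + γ_k δ_k / (4 α_min) ≤ f(x*) + c / (4 α_min)`.
Boundedness follows because strong convexity forces quadratic growth of `f` away from any point,
so the sublevel sets of `f` are bounded.
-/

section StrongConvexity

variable {E : Type*} [NormedAddCommGroup E] [NormedSpace ℝ E] {μ : ℝ} {f : E → ℝ}

/-- Strong convexity on the segment from `z` to `x`, evaluated at the point at distance `1`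
from `z`. -/
lemma StrongConvexOn.growth_of_le_on_closedBall (hf : StrongConvexOn Set.univ μ f) {z x : E}
    {K : ℝ} (hK : ∀ y ∈ Metric.closedBall z 1, K ≤ f y) (hx : 1 ≤ ‖x - z‖) :
    μ / 2 * ‖x - z‖ * (‖x - z‖ - 1) ≤ f x - f z + ‖x - z‖ * (f z - K) := by
  set d := ‖x - z‖ with hd
  have hd0 : 0 < d := by linarith
  set t := d⁻¹
  have ht : d * t = 1 := mul_inv_cancel₀ hd0.ne'
  have ht0 : 0 ≤ t := inv_nonneg.2 hd0.le
  have ht1 : 0 ≤ 1 - t := sub_nonneg.2 (inv_le_one_of_one_le₀ hx)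
  have hy : t • x + (1 - t) • z ∈ Metric.closedBall z 1 := by
    have : t • x + (1 - t) • z - z = t • (x - z) := by module
    rw [Metric.mem_closedBall, dist_eq_norm, this, norm_smul, Real.norm_of_nonneg ht0, ← hd,
      mul_comm, ht]
  have hseg := (hK _ hy).trans
    (hf.2 (Set.mem_univ x) (Set.mem_univ z) ht0 ht1 (add_sub_cancel t 1))
  simp only [smul_eq_mul, ← hd] at hseg
  clear_value t
  linear_combination d * hseg + (f x - f z - μ / 2 * (d ^ 2 - d ^ 2 * t - d)) * ht

lemma StrongConvexOn.isBounded_sublevel [FiniteDimensional ℝ E] (hf : StrongConvexOn Set.univ μ f)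
    (hμ : 0 < μ) (M : ℝ) : Bornology.IsBounded {x | f x ≤ M} := by
  have hcont : Continuous f := continuousOn_univ.1 <|
    (hf.convexOn fun r => by positivity).continuousOn isOpen_univ
  obtain ⟨K, hK⟩ := (isCompact_closedBall (0 : E) 1).bddBelow_image hcont.continuousOn
  have hK' : ∀ y ∈ Metric.closedBall (0 : E) 1, K ≤ f y := fun y hy => hK ⟨y, hy, rfl⟩
  have hK0 : K ≤ f 0 := hK' 0 (Metric.mem_closedBall_self zero_le_one)
  set C := |M - f 0| + (f 0 - K)
  refine isBounded_iff_forall_norm_le.2 ⟨1 + 2 * C / μ, fun x (hx : f x ≤ M) => ?_⟩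
  have hC : 0 ≤ 2 * C / μ := by positivity
  rcases le_or_gt ‖x‖ 1 with hx1 | hx1
  · linarith
  have hgrowth := hf.growth_of_le_on_closedBall hK' (x := x) (by simpa using hx1.le)
  rw [sub_zero] at hgrowth
  have hquad : μ / 2 * (‖x‖ - 1) * ‖x‖ ≤ C * ‖x‖ := by
    nlinarith [le_abs_self (M - f 0), abs_nonneg (M - f 0)]
  have hlin := le_of_mul_le_mul_right hquad (by linarith)
  rw [← sub_le_iff_le_add', le_div_iff₀ hμ]
  linarith

end StrongConvexity

lemma huber_nonneg {n : ℕ} {δ : ℝ} (hδ : 0 < δ) (a : EuclideanSpace ℝ (Fin n)) (b : ℝ)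
    (x : EuclideanSpace ℝ (Fin n)) : 0 ≤ huber δ a b x := by
  unfold huber
  split_ifs with h
  · exact div_nonneg (by linarith) (norm_nonneg a)
  · positivity
  · rfl

lemma huber_le_of_inner_le {n : ℕ} {δ : ℝ} (hδ : 0 < δ) {a : EuclideanSpace ℝ (Fin n)} {b : ℝ}
    {x : EuclideanSpace ℝ (Fin n)} (hx : ⟪a, x⟫ ≤ b) : huber δ a b x ≤ δ / (4 * ‖a‖) := by
  unfold huber
  split_ifs with hpos hquad
  · linarith
  · calc (⟪a, x⟫ - b + δ) ^ 2 / (4 * δ * ‖a‖) ≤ δ ^ 2 / (4 * δ * ‖a‖) := by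
          gcongr <;> linarith
      _ = δ / (4 * ‖a‖) := by
          rw [pow_two, mul_comm 4 δ, mul_assoc δ, mul_div_mul_left _ _ hδ.ne']
  · positivity

lemma penalty_le_of_forall_inner_le {n m : ℕ} {a : Fin m → EuclideanSpace ℝ (Fin n)}
    (ha : ∀ i, a i ≠ 0) {b : Fin m → ℝ} {γ δ : ℝ} (hγ : 0 ≤ γ) (hδ : 0 < δ)
    {x : EuclideanSpace ℝ (Fin n)} (hx : ∀ i, ⟪a i, x⟫ ≤ b i) :
    γ / m * ∑ i, huber δ (a i) (b i) x ≤ γ * δ / (4 * ⨅ i, ‖a i‖) := by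
  set α := ⨅ i, ‖a i‖
  have hα : 0 ≤ α := Real.iInf_nonneg fun i => norm_nonneg _
  have hterm : ∀ i, huber δ (a i) (b i) x ≤ δ / (4 * α) := fun i => by
    have : Nonempty (Fin m) := ⟨i⟩
    obtain ⟨j, hj⟩ := exists_eq_ciInf_of_finite (f := fun i => ‖a i‖)
    have hαpos : 0 < α := (norm_pos_iff.2 (ha j)).trans_eq hj
    refine (huber_le_of_inner_le hδ (hx i)).trans ?_
    gcongr
    exact ciInf_le (Set.finite_range _).bddBelow i
  calc γ / m * ∑ i, huber δ (a i) (b i) x ≤ γ / m * (m * (δ / (4 * α))) := by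
        gcongr
        exact (Finset.sum_le_sum fun i _ => hterm i).trans_eq (by simp)
    -- `m / m ≤ 1` rather than `= 1`, so that the empty family `m = 0` needs no separate case
    _ = γ * δ / (4 * α) * (m / m) := by ring
    _ ≤ γ * δ / (4 * α) := mul_le_of_le_one_right (by positivity) (div_self_le_one _)

theorem penalized_minimizers_in_level_set_general {n m : ℕ} (μ : ℝ) (hμ : 0 < μ)
    (f : EuclideanSpace ℝ (Fin n) → ℝ) (hf : StrongConvexOn Set.univ μ f)
    (a : Fin m → EuclideanSpace ℝ (Fin n)) (ha : ∀ i, a i ≠ 0) (b : Fin m → ℝ)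
    (X : Set (EuclideanSpace ℝ (Fin n)))
    (hX : X = {x | ∀ i, ⟪a i, x⟫ ≤ b i})
    (xstar : EuclideanSpace ℝ (Fin n)) (hxstarX : xstar ∈ X)
    (c : ℝ) (γ δ : ℕ → ℝ) (hγ : ∀ k, 0 < γ k) (hδ : ∀ k, 0 < δ k)
    (hγδ : ∀ k, γ k * δ k ≤ c)
    (xk : ℕ → EuclideanSpace ℝ (Fin n))
    (hxk : ∀ k, IsMinOn (fun x => f x + (γ k / m) * ∑ i, huber (δ k) (a i) (b i) x)
      Set.univ (xk k)) :
    (∀ k, f (xk k) ≤ f xstar + c / (4 * ⨅ i, ‖a i‖)) ∧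
      Bornology.IsBounded (Set.range xk) := by
  subst hX
  have hlevel : ∀ k, f (xk k) ≤ f xstar + c / (4 * ⨅ i, ‖a i‖) := fun k => by
    have hmin : f (xk k) + _ ≤ f xstar + _ := hxk k (Set.mem_univ xstar)
    have hpen_nonneg : 0 ≤ γ k / m * ∑ i, huber (δ k) (a i) (b i) (xk k) :=
      mul_nonneg (div_nonneg (hγ k).le m.cast_nonneg)
        (Finset.sum_nonneg fun i _ => huber_nonneg (hδ k) (a i) (b i) (xk k))
    have hpen_star := penalty_le_of_forall_inner_le ha (hγ k).le (hδ k) hxstarX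
    have hpen_le_c : γ k * δ k / (4 * ⨅ i, ‖a i‖) ≤ c / (4 * ⨅ i, ‖a i‖) := by
      have := Real.iInf_nonneg fun i => norm_nonneg (a i)
      gcongr
      exact hγδ k
    linarith
  exact ⟨hlevel, (hf.isBounded_sublevel hμ _).subset (Set.range_subset_iff.2 hlevel)⟩

/-- If `γ_k δ_k ≤ c` for all `k`, then the minimizers `x_k*` of the penalized problems lie in
the level set `{x : f(x) ≤ f(x*) + c/(4 α_min)}`; in particular they form a bounded sequence. -/
theorem penalized_minimizers_in_level_set {n m : ℕ} (hm : 0 < m) (μ : ℝ) (hμ : 0 < μ)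
    (f : EuclideanSpace ℝ (Fin n) → ℝ) (hf : StrongConvexOn Set.univ μ f)
    (a : Fin m → EuclideanSpace ℝ (Fin n)) (ha : ∀ i, a i ≠ 0) (b : Fin m → ℝ)
    (X : Set (EuclideanSpace ℝ (Fin n)))
    (hX : X = {x | ∀ i, ⟪a i, x⟫ ≤ b i}) (hXne : X.Nonempty)
    (xstar : EuclideanSpace ℝ (Fin n)) (hxstarX : xstar ∈ X) (hxstar : IsMinOn f X xstar)
    (c : ℝ) (hc : 0 < c) (γ δ : ℕ → ℝ) (hγ : ∀ k, 0 < γ k) (hδ : ∀ k, 0 < δ k)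
    (hγδ : ∀ k, γ k * δ k ≤ c)
    (xk : ℕ → EuclideanSpace ℝ (Fin n))
    (hxk : ∀ k, IsMinOn (fun x => f x + (γ k / m) * ∑ i, huber (δ k) (a i) (b i) x)
      Set.univ (xk k)) :
    (∀ k, f (xk k) ≤ f xstar + c / (4 * ⨅ i, ‖a i‖)) ∧
      Bornology.IsBounded (Set.range xk) :=
  penalized_minimizers_in_level_set_general μ hμ f hf a ha b X hX xstar hxstarX c γ δ hγ hδ hγδ xk
    hxk
end
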